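/- The viable set B := {(s₀,i₀) ∈ T : there exists a control u with i^{s₀,i₀,u}(t) ≤ i_M for all t ∈ (0,∞)} equals the set {(s,i) ∈ T : 0 < i ≤ Φ_max(s)}, where Φ_max(s) = i_M for 0 < s < γ/(β−u_max) and Φ_max(s) = γ/(β−u_max) + i_M − s + (γ/(β−u_max))·(log s − log(γ/(β−u_max))) for s ≥ γ/(β−u_max). -/

import Mathlib

open MeasureTheory Filter Set intervalIntegral
open scoped ENNReal

noncomputable section

/-- A control: a measurable (essentially bounded) function with values in `[0, umax]`. -/
def IsControl (umax : ℝ) (u : ℝ → ℝ) : Prop :=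
  Measurable u ∧ ∀ t : ℝ, u t ∈ Set.Icc (0 : ℝ) umax

/-- Solution of the controlled SIR system on `[0,∞)`, in integral (i.e. locally absolutely
continuous) form: `s' = -(β-u)·s·i`, `i' = (β-u)·s·i - γ·i` a.e., `s 0 = s₀`, `i 0 = i₀`. -/
def SIRSol (β γ : ℝ) (u s i : ℝ → ℝ) (s₀ i₀ : ℝ) : Prop :=
  Continuous s ∧ Continuous i ∧
  (∀ t : ℝ, 0 ≤ t → s t = s₀ + ∫ τ in (0:ℝ)..t, -((β - u τ) * s τ * i τ)) ∧
  (∀ t : ℝ, 0 ≤ t → i t = i₀ + ∫ τ in (0:ℝ)..t, ((β - u τ) * s τ * i τ - γ * i τ))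

/-- Solution of the controlled SIR system on `[0,T]`, in integral form. -/
def SIRSolOn (β γ T : ℝ) (u s i : ℝ → ℝ) (s₀ i₀ : ℝ) : Prop :=
  ContinuousOn s (Set.Icc 0 T) ∧ ContinuousOn i (Set.Icc 0 T) ∧
  (∀ t ∈ Set.Icc (0:ℝ) T, s t = s₀ + ∫ τ in (0:ℝ)..t, -((β - u τ) * s τ * i τ)) ∧
  (∀ t ∈ Set.Icc (0:ℝ) T, i t = i₀ + ∫ τ in (0:ℝ)..t, ((β - u τ) * s τ * i τ - γ * i τ))

/-- The triangle `T = {(s,i) ∈ (0,1]² : s + i ≤ 1}`. -/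
def Triangle : Set (ℝ × ℝ) :=
  {p | 0 < p.1 ∧ p.1 ≤ 1 ∧ 0 < p.2 ∧ p.2 ≤ 1 ∧ p.1 + p.2 ≤ 1}

/-- The curve `Φ_max`. -/
def PhiMax (β γ umax iM : ℝ) (x : ℝ) : ℝ :=
  if x < γ / (β - umax) then iM
  else γ / (β - umax) + iM - x + (γ / (β - umax)) * (Real.log x - Real.log (γ / (β - umax)))

/-- The curve `Φ₀`. -/
def Phi0 (β γ iM : ℝ) (x : ℝ) : ℝ :=
  if x < γ / β then iM
  else γ / β + iM - x + (γ / β) * (Real.log x - Real.log (γ / β))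

/-- The ICU (state) constraint `i(t) ≤ i_M` for all `t ≥ 0`. -/
def Admissible (iM : ℝ) (i : ℝ → ℝ) : Prop := ∀ t : ℝ, 0 ≤ t → i t ≤ iM

/-- Infinite-horizon cost `J^∞(u) = ∫₀^∞ (λ₁ u + λ₂ i) dt`, with values in `[0,∞]`. -/
def Cost (l1 l2 : ℝ) (u i : ℝ → ℝ) : ℝ≥0∞ :=
  ∫⁻ t in Set.Ioi (0:ℝ), ENNReal.ofReal (l1 * u t + l2 * i t)

/-- Finite-horizon cost `J^T(u) = ∫₀^T (λ₁ u + λ₂ i) dt`. -/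
def CostT (l1 l2 T : ℝ) (u i : ℝ → ℝ) : ℝ≥0∞ :=
  ∫⁻ t in Set.Ioc (0:ℝ) T, ENNReal.ofReal (l1 * u t + l2 * i t)

/-- The safe (no-effort) zone `A`. -/
def SafeZone (β γ iM : ℝ) : Set (ℝ × ℝ) :=
  {p | p ∈ Triangle ∧ ∃ s i : ℝ → ℝ,
    SIRSol β γ (fun _ => 0) s i p.1 p.2 ∧ Admissible iM i}

/-- The viable (feasible) set `B`. -/
def ViableSet (β γ umax iM : ℝ) : Set (ℝ × ℝ) :=
  {p | p ∈ Triangle ∧ ∃ u s i : ℝ → ℝ, IsControl umax u ∧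
    SIRSol β γ u s i p.1 p.2 ∧ Admissible iM i}

/-- Weak* convergence in `L^∞(0,∞)`: testing against every `L¹` function. -/
def WeakStarLim (un : ℕ → ℝ → ℝ) (u : ℝ → ℝ) : Prop :=
  ∀ g : ℝ → ℝ, MeasureTheory.IntegrableOn g (Set.Ioi 0) →
    Filter.Tendsto (fun n => ∫ t in Set.Ioi (0:ℝ), un n t * g t) Filter.atTop
      (nhds (∫ t in Set.Ioi (0:ℝ), u t * g t))

/-!
Write `ρ = γ / (β - umax)` and `g = sirPotential ρ`, i.e. `g x = x - ρ log x`. Along every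
controlled trajectory `i + g s` is nondecreasing, because `β - u ≥ β - umax`, and under `u ≡ umax`
it is conserved. Every trajectory brings `s` down to `min s₀ ρ` (while `s > ρ`, `i` cannot
decrease, and `s + i = s₀ + i₀ - γ ∫ i` would become negative), and there
`i ≥ i₀ + g s₀ - g (min s₀ ρ)`. Under `u ≡ umax`, `s` decreases and `i = i₀ + g s₀ - g s` never
exceeds that value, since on `(0, s₀]` the convex function `g` is smallest at `min s₀ ρ`.
Finally `Φ_max s₀ = i_M + g (min s₀ ρ) - g s₀`.
-/

lemma exists_first_nonpos {φ : ℝ → ℝ} {p q : ℝ} (hφ : ContinuousOn φ (Icc p q)) (hpq : p ≤ q)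
    (hq : φ q ≤ 0) : ∃ c ∈ Icc p q, φ c ≤ 0 ∧ ∀ x ∈ Ico p c, 0 < φ x := by
  have hS : IsCompact (Icc p q ∩ φ ⁻¹' Iic 0) :=
    isCompact_Icc.of_isClosed_subset (hφ.preimage_isClosed_of_isClosed isClosed_Icc isClosed_Iic)
      inter_subset_left
  obtain ⟨c, ⟨hc, hφc⟩, hleast⟩ := hS.exists_isLeast ⟨q, ⟨hpq, le_rfl⟩, hq⟩
  refine ⟨c, hc, hφc, fun x hx => ?_⟩
  by_contra! hφx
  exact hx.2.not_ge (hleast ⟨⟨hx.1, hx.2.le.trans hc.2⟩, hφx⟩)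

lemma exists_last_nonpos {φ : ℝ → ℝ} {p q : ℝ} (hφ : ContinuousOn φ (Icc p q)) (hpq : p ≤ q)
    (hp : φ p ≤ 0) : ∃ c ∈ Icc p q, φ c ≤ 0 ∧ ∀ x ∈ Ioc c q, 0 < φ x := by
  have hS : IsCompact (Icc p q ∩ φ ⁻¹' Iic 0) :=
    isCompact_Icc.of_isClosed_subset (hφ.preimage_isClosed_of_isClosed isClosed_Icc isClosed_Iic)
      inter_subset_left
  obtain ⟨c, ⟨hc, hφc⟩, hgreatest⟩ := hS.exists_isGreatest ⟨p, ⟨le_rfl, hpq⟩, hp⟩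
  refine ⟨c, hc, hφc, fun x hx => ?_⟩
  by_contra! hφx
  exact hx.1.not_ge (hgreatest ⟨⟨hc.1.trans hx.1.le, hx.2⟩, hφx⟩)

lemma nonpos_of_sub_eq_integral {φ g : ℝ → ℝ} {p q : ℝ} (hφ : ContinuousOn φ (Icc p q))
    (hp : φ p ≤ 0) (hinc : ∀ x ∈ Icc p q, ∀ y ∈ Icc x q, φ y - φ x = ∫ τ in x..y, g τ)
    (hg : ∀ τ ∈ Ioo p q, 0 < φ τ → g τ ≤ 0) : ∀ t ∈ Icc p q, φ t ≤ 0 := by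
  intro t ht
  by_contra! hφt
  obtain ⟨c, hc, hφc, hpos⟩ := exists_last_nonpos (hφ.mono (Icc_subset_Icc_right ht.2)) ht.1 hp
  have hct : c < t := hc.2.lt_of_ne (by rintro rfl; exact hφc.not_gt hφt)
  have hint : ∫ τ in c..t, g τ ≤ 0 := by
    rw [intervalIntegral.integral_of_le hct.le, integral_Ioc_eq_integral_Ioo]
    refine setIntegral_nonpos measurableSet_Ioo fun τ hτ =>
      hg τ ?_ (hpos τ (Ioo_subset_Ioc_self hτ))
    exact ⟨hc.1.trans_lt hτ.1, hτ.2.trans_le ht.2⟩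
  linarith [hinc c ⟨hc.1, hct.le.trans ht.2⟩ t ⟨hct.le, ht.2⟩]

lemma sub_eq_integral_of_eq_add_integral {f w : ℝ → ℝ} {c : ℝ}
    (hw : ∀ a b, IntervalIntegrable w volume a b)
    (hf : ∀ t, 0 ≤ t → f t = c + ∫ τ in (0:ℝ)..t, w τ) {x y : ℝ} (hx : 0 ≤ x) (hy : 0 ≤ y) :
    f y - f x = ∫ τ in x..y, w τ := by
  rw [hf y hy, hf x hx, add_sub_add_left_eq_sub,
    intervalIntegral.integral_interval_sub_left (hw 0 y) (hw 0 x)]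

/-- Up to its first zero, `f` dominates `f 0 * exp (-K t)` where `-K` bounds `a` from below, so
it has no zero. -/
lemma pos_of_eq_add_integral_mul {f a : ℝ → ℝ} (hf : Continuous f)
    (haf : ∀ x y, IntervalIntegrable (fun τ => a τ * f τ) volume x y)
    (heq : ∀ t, 0 ≤ t → f t = f 0 + ∫ τ in (0:ℝ)..t, a τ * f τ) (h0 : 0 < f 0)
    (ha : ∀ T, ∃ K, ∀ τ ∈ Icc 0 T, -K ≤ a τ) : ∀ t, 0 ≤ t → 0 < f t := by
  intro t ht
  by_contra! hft
  obtain ⟨c, hc, hfc, hpos⟩ := exists_first_nonpos hf.continuousOn ht hft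
  obtain ⟨K₀, hK₀⟩ := ha c
  set K := max K₀ 0
  have hK : ∀ τ ∈ Icc 0 c, -K ≤ a τ := fun τ hτ => (neg_le_neg (le_max_left K₀ 0)).trans (hK₀ τ hτ)
  set E : ℝ → ℝ := fun τ => f 0 * Real.exp (-K * τ)
  have hE : ∀ τ, HasDerivAt E (-K * E τ) τ := fun τ => by
    simpa [E, mul_comm, mul_left_comm, mul_assoc] using
      ((hasDerivAt_id τ).const_mul (-K)).exp.const_mul (f 0)
  have hEcont : Continuous E := by fun_prop
  have hcomp := nonpos_of_sub_eq_integral (φ := fun τ => E τ - f τ)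
    (g := fun τ => -K * E τ - a τ * f τ) (hEcont.sub hf).continuousOn (by simp [E])
    (fun x hx y hy => by
      rw [sub_sub_sub_comm,
        intervalIntegral.integral_sub ((hEcont.const_mul _).intervalIntegrable _ _) (haf x y),
        intervalIntegral.integral_eq_sub_of_hasDerivAt (fun τ _ => hE τ)
          ((hEcont.const_mul _).intervalIntegrable _ _),
        sub_eq_integral_of_eq_add_integral haf heq hx.1 (hx.1.trans hy.1)])
    (fun τ hτ hφτ => by
      have hfτ := hpos τ ⟨hτ.1.le, hτ.2⟩
      nlinarith [mul_nonneg (le_max_right K₀ 0) hφτ.le,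
        mul_nonneg (neg_le_iff_add_nonneg.mp (hK τ ⟨hτ.1.le, hτ.2.le⟩)) hfτ.le])
    c ⟨hc.1, le_rfl⟩
  have : 0 < E c := by positivity
  linarith

/-- Comparison with `∫ τ in x₀..x, (C * (b - τ))⁻¹ = C⁻¹ * log ((b - x₀) / (b - x))`. -/
lemma exists_le_integral_inv {h : ℝ → ℝ} {x₀ b C : ℝ} (hC : 0 < C) (hx₀b : x₀ < b)
    (hcont : ContinuousOn h (Ico x₀ b)) (hpos : ∀ x ∈ Ico x₀ b, 0 < h x)
    (hle : ∀ x ∈ Ico x₀ b, h x ≤ C * (b - x)) (T : ℝ) :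
    ∃ x ∈ Ico x₀ b, T ≤ ∫ τ in x₀..x, (h τ)⁻¹ := by
  set x := b - (b - x₀) * Real.exp (-(C * max T 0))
  have hexp : Real.exp (-(C * max T 0)) ≤ 1 :=
    Real.exp_le_one_iff.2 (neg_nonpos.2 (mul_nonneg hC.le (le_max_right T 0)))
  have hbx : b - x = (b - x₀) * Real.exp (-(C * max T 0)) := by ring
  have hbx_pos : 0 < b - x := by rw [hbx]; exact mul_pos (by linarith) (Real.exp_pos _)
  have hx : x ∈ Ico x₀ b := ⟨by nlinarith, by linarith⟩
  refine ⟨x, hx, ?_⟩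
  have hsub : Icc x₀ x ⊆ Ico x₀ b := Icc_subset_Ico_right hx.2
  have hlog : ∫ τ in x₀..x, C⁻¹ * (b - τ)⁻¹ = max T 0 := by
    rw [intervalIntegral.integral_const_mul, intervalIntegral.integral_comp_sub_left (fun σ => σ⁻¹),
      integral_inv_of_pos hbx_pos (by linarith), hbx, div_mul_cancel_left₀ (by linarith),
      Real.log_inv, Real.log_exp]
    field_simp
  calc T ≤ max T 0 := le_max_left T 0
    _ = ∫ τ in x₀..x, C⁻¹ * (b - τ)⁻¹ := hlog.symm
    _ ≤ ∫ τ in x₀..x, (h τ)⁻¹ := by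
      refine intervalIntegral.integral_mono_on hx.1 ?_ ?_ fun τ hτ => ?_
      · exact ContinuousOn.intervalIntegrable_of_Icc hx.1 (continuousOn_const.mul
          ((continuousOn_const.sub continuousOn_id).inv₀ fun τ hτ => by
            simp only [Pi.sub_apply, id]; linarith [hτ.2]))
      · exact ContinuousOn.intervalIntegrable_of_Icc hx.1
          ((hcont.mono hsub).inv₀ fun τ hτ => (hpos τ (hsub hτ)).ne')
      · rw [← mul_inv]
        exact inv_anti₀ (hpos τ (hsub hτ)) (hle τ (hsub hτ))

lemma exists_hasDerivAt_inverse {F f : ℝ → ℝ} {a b : ℝ} (hF : ∀ x ∈ Ioo a b, HasDerivAt F (f x) x)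
    (hf : ∀ x ∈ Ioo a b, 0 < f x) (hsurj : ∀ T, ∃ x ∈ Ioo a b, F x = T) :
    ∃ y : ℝ → ℝ, (∀ t, y t ∈ Ioo a b) ∧ (∀ x ∈ Ioo a b, y (F x) = x) ∧
      ∀ t, HasDerivAt y (f (y t))⁻¹ t := by
  have hFmono : StrictMonoOn F (Ioo a b) :=
    strictMonoOn_of_deriv_pos (convex_Ioo a b)
      (fun x hx => (hF x hx).continuousAt.continuousWithinAt) fun x hx => by
        rw [interior_Ioo] at hx
        rw [(hF x hx).deriv]
        exact hf x hx
  set y : ℝ → ℝ := Function.invFunOn F (Ioo a b)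
  have hy : ∀ t, y t ∈ Ioo a b ∧ F (y t) = t := fun t => Function.invFunOn_pos (hsurj t)
  have hyF : ∀ x ∈ Ioo a b, y (F x) = x := fun x hx => hFmono.injOn (hy (F x)).1 hx (hy (F x)).2
  have hymono : Monotone y := fun s t hst =>
    (hFmono.le_iff_le (hy s).1 (hy t).1).1 (by rw [(hy s).2, (hy t).2]; exact hst)
  have hycont : ∀ t, ContinuousAt y t := fun t =>
    continuousAt_of_monotoneOn_of_image_mem_nhds (hymono.monotoneOn univ) univ_mem
      (mem_of_superset (Ioo_mem_nhds (hy t).1.1 (hy t).1.2) fun x hx => ⟨F x, trivial, hyF x hx⟩)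
  refine ⟨y, fun t => (hy t).1, hyF, fun t => ?_⟩
  simpa using HasDerivAt.of_local_left_inverse (hycont t) (hF (y t) (hy t).1)
    (hf _ (hy t).1).ne' (Eventually.of_forall fun s => (hy s).2)

/-- The integral curve is the inverse of `x ↦ ∫ τ in x₀..x, 1 / h τ`, which the at most linear
vanishing of `h` at `a` and `b` makes a bijection `(a, b) → ℝ`. -/
theorem exists_hasDerivAt_of_pos_of_le_mul {h : ℝ → ℝ} {a b x₀ C : ℝ} (hx₀ : x₀ ∈ Ioo a b)
    (hcont : ContinuousOn h (Ioo a b)) (hpos : ∀ x ∈ Ioo a b, 0 < h x)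
    (hlow : ∀ x ∈ Ioo a b, h x ≤ C * (x - a)) (hup : ∀ x ∈ Ioo a b, h x ≤ C * (b - x)) :
    ∃ y : ℝ → ℝ, y 0 = x₀ ∧ (∀ t, y t ∈ Ioo a b) ∧ ∀ t, HasDerivAt y (h (y t)) t := by
  have hC : 0 < C :=
    pos_of_mul_pos_left ((hpos x₀ hx₀).trans_le (hup x₀ hx₀)) (by linarith [hx₀.2])
  set F : ℝ → ℝ := fun x => ∫ τ in x₀..x, (h τ)⁻¹
  have hinv : ContinuousOn (fun x => (h x)⁻¹) (Ioo a b) :=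
    hcont.inv₀ fun x hx => (hpos x hx).ne'
  have hF : ∀ x ∈ Ioo a b, HasDerivAt F (h x)⁻¹ x := fun x hx =>
    intervalIntegral.integral_hasDerivAt_right
      (hinv.mono (ordConnected_Ioo.uIcc_subset hx₀ hx)).intervalIntegrable
      (hinv.stronglyMeasurableAtFilter isOpen_Ioo x hx) (hinv.continuousAt (Ioo_mem_nhds hx.1 hx.2))
  have hFup : ∀ T, ∃ x ∈ Ioo a b, T ≤ F x := fun T => by
    obtain ⟨x, hx, hT⟩ := exists_le_integral_inv hC hx₀.2 (hcont.mono (Ico_subset_Ioo_left hx₀.1))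
      (fun x hx => hpos x ⟨hx₀.1.trans_le hx.1, hx.2⟩)
      (fun x hx => hup x ⟨hx₀.1.trans_le hx.1, hx.2⟩) T
    exact ⟨x, ⟨hx₀.1.trans_le hx.1, hx.2⟩, hT⟩
  have hFlow : ∀ T, ∃ x ∈ Ioo a b, F x ≤ T := fun T => by
    have hmem : ∀ x ∈ Ico (-x₀) (-a), -x ∈ Ioo a b := fun x hx =>
      ⟨by linarith [hx.2], by linarith [hx.1, hx₀.2]⟩
    obtain ⟨x, hx, hT⟩ := exists_le_integral_inv (h := fun τ => h (-τ)) hC (neg_lt_neg hx₀.1)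
      (hcont.comp continuousOn_neg hmem) (fun x hx => hpos _ (hmem x hx))
      (fun x hx => by linarith [hlow _ (hmem x hx)]) (-T)
    refine ⟨-x, hmem x hx, ?_⟩
    rw [intervalIntegral.integral_comp_neg (fun τ => (h τ)⁻¹), neg_neg,
      intervalIntegral.integral_symm] at hT
    linarith
  have hsurj : ∀ T, ∃ x ∈ Ioo a b, F x = T := fun T => by
    obtain ⟨x₁, hx₁, hFx₁⟩ := hFlow T
    obtain ⟨x₂, hx₂, hFx₂⟩ := hFup T
    have hsub : uIcc x₁ x₂ ⊆ Ioo a b := ordConnected_Ioo.uIcc_subset hx₁ hx₂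
    obtain ⟨x, hx, hFx⟩ := intermediate_value_uIcc
      (fun x hx => (hF x (hsub hx)).continuousAt.continuousWithinAt) (Icc_subset_uIcc ⟨hFx₁, hFx₂⟩)
    exact ⟨x, hsub hx, hFx⟩
  obtain ⟨y, hy, hyF, hyd⟩ := exists_hasDerivAt_inverse hF (fun x hx => inv_pos.2 (hpos x hx)) hsurj
  exact ⟨y, by simpa [F] using hyF x₀ hx₀, hy, fun t => by simpa using hyd t⟩

def sirPotential (ρ x : ℝ) : ℝ := x - ρ * Real.log x

lemma sirPotential_tangent_le {ρ x z : ℝ} (hρ : 0 ≤ ρ) (hx : 0 < x) (hz : 0 < z) :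
    sirPotential ρ z + (1 - ρ / z) * (x - z) ≤ sirPotential ρ x := by
  have hlog : Real.log x - Real.log z ≤ (x - z) / z := by
    have := Real.log_le_sub_one_of_pos (div_pos hx hz)
    rwa [Real.log_div hx.ne' hz.ne', div_sub_one hz.ne'] at this
  have := mul_le_mul_of_nonneg_left hlog hρ
  unfold sirPotential
  rw [mul_div_assoc'] at this
  field_simp at this ⊢
  nlinarith

lemma hasDerivAt_sirPotential (ρ : ℝ) {x : ℝ} (hx : 0 < x) :
    HasDerivAt (sirPotential ρ) (1 - ρ * x⁻¹) x :=
  (hasDerivAt_id x).sub ((Real.hasDerivAt_log hx.ne').const_mul ρ)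

lemma sub_sirPotential_le_abs_mul {ρ V x z : ℝ} (hρ : 0 ≤ ρ) (hx : 0 < x) (hz : 0 < z)
    (hVz : V ≤ sirPotential ρ z) : V - sirPotential ρ x ≤ |ρ / z - 1| * |x - z| := by
  have := sirPotential_tangent_le hρ hx hz
  rw [← abs_mul]
  linarith [le_abs_self ((ρ / z - 1) * (x - z))]

lemma sirPotential_min_le {ρ x s₀ : ℝ} (hρ : 0 < ρ) (hx : 0 < x) (hxs₀ : x ≤ s₀) :
    sirPotential ρ (min s₀ ρ) ≤ sirPotential ρ x := by
  refine le_trans ?_ (sirPotential_tangent_le hρ.le hx (lt_min (hx.trans_le hxs₀) hρ))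
  rcases le_total s₀ ρ with h | h
  · rw [min_eq_left h]
    have : 1 - ρ / s₀ ≤ 0 := by rw [sub_nonpos, one_le_div (hx.trans_le hxs₀)]; exact h
    nlinarith
  · simp [min_eq_right h, hρ.ne']

lemma phiMax_eq (β γ umax iM x : ℝ) :
    PhiMax β γ umax iM x = iM + sirPotential (γ / (β - umax)) (min x (γ / (β - umax)))
      - sirPotential (γ / (β - umax)) x := by
  unfold PhiMax
  split_ifs with h
  · rw [min_eq_left h.le]; ring
  · rw [min_eq_right (not_lt.1 h)]; unfold sirPotential; ring

lemma exists_Ioo_sirPotential_lt {ρ V x₀ : ℝ} (hρ : 0 < ρ) (hx₀ : 0 < x₀)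
    (hV : sirPotential ρ x₀ < V) :
    ∃ a b, 0 < a ∧ a < x₀ ∧ x₀ < b ∧ V ≤ sirPotential ρ a ∧ V ≤ sirPotential ρ b ∧
      ∀ x ∈ Ioo a b, sirPotential ρ x < V := by
  set φ : ℝ → ℝ := fun x => V - sirPotential ρ x
  have hφ : ∀ p q, 0 < p → ContinuousOn φ (Icc p q) := fun p q hp =>
    continuousOn_const.sub (continuousOn_id.sub (continuousOn_const.mul
      (Real.continuousOn_log.mono fun x hx => (hp.trans_le hx.1).ne')))
  set x₁ := min x₀ (Real.exp (-|V| / ρ))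
  have hx₁ : 0 < x₁ := lt_min hx₀ (Real.exp_pos _)
  have hφx₁ : V ≤ sirPotential ρ x₁ := by
    have hlog : Real.log x₁ ≤ -|V| / ρ :=
      (Real.log_le_log hx₁ (min_le_right _ _)).trans (Real.log_exp _).le
    have := mul_le_mul_of_nonneg_left hlog hρ.le
    rw [mul_div_cancel₀ _ hρ.ne'] at this
    unfold sirPotential
    linarith [le_abs_self V]
  set x₂ := max x₀ (2 * ρ + 2 * |V - sirPotential ρ (2 * ρ)|)
  have hx₂ : 2 * ρ ≤ x₂ :=
    le_max_of_le_right (by linarith [abs_nonneg (V - sirPotential ρ (2 * ρ))])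
  have hφx₂ : V ≤ sirPotential ρ x₂ := by
    have := sirPotential_tangent_le hρ.le (by linarith) (by linarith : 0 < 2 * ρ) (x := x₂)
    rw [div_mul_cancel_right₀ hρ.ne'] at this
    have := le_max_right x₀ (2 * ρ + 2 * |V - sirPotential ρ (2 * ρ)|)
    linarith [le_abs_self (V - sirPotential ρ (2 * ρ))]
  obtain ⟨a, ha, hφa, hφ_gt⟩ :=
    exists_last_nonpos (hφ x₁ x₀ hx₁) (min_le_left _ _) (sub_nonpos.2 hφx₁)
  obtain ⟨b, hb, hφb, hφ_lt⟩ :=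
    exists_first_nonpos (hφ x₀ x₂ hx₀) (le_max_left _ _) (sub_nonpos.2 hφx₂)
  have hx₀a : a < x₀ := ha.2.lt_of_ne (by rintro rfl; linarith [sub_nonpos.1 hφa])
  have hx₀b : x₀ < b := hb.1.lt_of_ne (by rintro rfl; linarith [sub_nonpos.1 hφb])
  refine ⟨a, b, hx₁.trans_le ha.1, hx₀a, hx₀b, sub_nonpos.1 hφa, sub_nonpos.1 hφb,
    fun x hx => sub_pos.1 ?_⟩
  rcases le_total x x₀ with h | h
  · exact hφ_gt x ⟨hx.1, h⟩
  · exact hφ_lt x ⟨h, hx.2⟩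

section ControlledSIR

variable {β γ umax : ℝ} {u s i : ℝ → ℝ} {s₀ i₀ : ℝ}

lemma IsControl.exists_abs_sub_mul_le (hu : IsControl umax u) (c : ℝ) {g : ℝ → ℝ}
    (hg : Continuous g) (T : ℝ) : ∃ K, ∀ τ ∈ Icc 0 T, |(c - u τ) * g τ| ≤ K := by
  obtain ⟨M, hM⟩ := (isCompact_Icc (a := 0) (b := T)).exists_bound_of_continuousOn hg.continuousOn
  refine ⟨(|c| + umax) * M, fun τ hτ => ?_⟩
  have hu' := hu.2 τ
  rw [abs_mul]
  refine mul_le_mul ?_ (hM τ hτ) (abs_nonneg _) (by linarith [abs_nonneg c, hu'.1.trans hu'.2])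
  linarith [abs_sub c (u τ), abs_of_nonneg hu'.1, hu'.2]

lemma IsControl.intervalIntegrable_sub (hu : IsControl umax u) (c a b : ℝ) :
    IntervalIntegrable (fun τ => c - u τ) volume a b := by
  refine intervalIntegrable_const (c := |c| + umax) |>.mono_fun'
    (measurable_const.sub hu.1).aestronglyMeasurable (ae_of_all _ fun τ => ?_)
  have hu' := hu.2 τ
  simp only [Real.norm_eq_abs]
  linarith [abs_sub c (u τ), abs_of_nonneg hu'.1, hu'.2]

namespace SIRSol

lemma s_zero (hsol : SIRSol β γ u s i s₀ i₀) : s 0 = s₀ := by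
  simpa using hsol.2.2.1 0 le_rfl

lemma i_zero (hsol : SIRSol β γ u s i s₀ i₀) : i 0 = i₀ := by
  simpa using hsol.2.2.2 0 le_rfl

lemma intervalIntegrable_s (hu : IsControl umax u) (hsol : SIRSol β γ u s i s₀ i₀) (a b : ℝ) :
    IntervalIntegrable (fun τ => -((β - u τ) * s τ * i τ)) volume a b :=
  (((hu.intervalIntegrable_sub β a b).mul_continuousOn hsol.1.continuousOn).mul_continuousOn
    hsol.2.1.continuousOn).neg

lemma intervalIntegrable_i (hu : IsControl umax u) (hsol : SIRSol β γ u s i s₀ i₀) (a b : ℝ) :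
    IntervalIntegrable (fun τ => (β - u τ) * s τ * i τ - γ * i τ) volume a b :=
  (((hu.intervalIntegrable_sub β a b).mul_continuousOn hsol.1.continuousOn).mul_continuousOn
    hsol.2.1.continuousOn).sub ((continuous_const.mul hsol.2.1).intervalIntegrable a b)

lemma s_pos (hu : IsControl umax u) (hsol : SIRSol β γ u s i s₀ i₀) (hs₀ : 0 < s₀) :
    ∀ t, 0 ≤ t → 0 < s t := by
  have hform : (fun τ => -((β - u τ) * i τ) * s τ) = fun τ => -((β - u τ) * s τ * i τ) := by
    funext τ; ring
  refine pos_of_eq_add_integral_mul (a := fun τ => -((β - u τ) * i τ)) hsol.1 (fun x y => ?_)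
    (fun t ht => ?_) (hsol.s_zero ▸ hs₀) fun T => ?_
  · rw [hform]; exact hsol.intervalIntegrable_s hu x y
  · rw [hform, hsol.s_zero]; exact hsol.2.2.1 t ht
  · obtain ⟨K, hK⟩ := hu.exists_abs_sub_mul_le β hsol.2.1 T
    exact ⟨K, fun τ hτ => neg_le_neg ((le_abs_self _).trans (hK τ hτ))⟩

lemma i_pos (hu : IsControl umax u) (hsol : SIRSol β γ u s i s₀ i₀) (hi₀ : 0 < i₀) :
    ∀ t, 0 ≤ t → 0 < i t := by
  have hform : (fun τ => ((β - u τ) * s τ - γ) * i τ) =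
      fun τ => (β - u τ) * s τ * i τ - γ * i τ := by
    funext τ; ring
  refine pos_of_eq_add_integral_mul (a := fun τ => (β - u τ) * s τ - γ) hsol.2.1 (fun x y => ?_)
    (fun t ht => ?_) (hsol.i_zero ▸ hi₀) fun T => ?_
  · rw [hform]; exact hsol.intervalIntegrable_i hu x y
  · rw [hform, hsol.i_zero]; exact hsol.2.2.2 t ht
  · obtain ⟨K, hK⟩ := hu.exists_abs_sub_mul_le β hsol.1 T
    exact ⟨K + |γ|, fun τ hτ => by linarith [neg_abs_le ((β - u τ) * s τ), hK τ hτ, le_abs_self γ]⟩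

lemma s_add_i_eq (hu : IsControl umax u) (hsol : SIRSol β γ u s i s₀ i₀) {t : ℝ} (ht : 0 ≤ t) :
    s t + i t = s₀ + i₀ - γ * ∫ τ in (0:ℝ)..t, i τ := by
  rw [hsol.2.2.1 t ht, hsol.2.2.2 t ht, add_add_add_comm, ← intervalIntegral.integral_add
    (hsol.intervalIntegrable_s hu 0 t) (hsol.intervalIntegrable_i hu 0 t),
    ← intervalIntegral.integral_const_mul, sub_eq_add_neg, ← intervalIntegral.integral_neg]
  congr 2
  funext τ
  ring

/-- `s - s₀ * exp (-(β - umax) * ∫ i)` has nonpositive density wherever it is positive, since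
`β - u ≥ β - umax`. -/
lemma s_le_exp (hu : IsControl umax u) (hsol : SIRSol β γ u s i s₀ i₀) (hβ : umax ≤ β)
    (hs₀ : 0 ≤ s₀) (hi₀ : 0 < i₀) {t : ℝ} (ht : 0 ≤ t) :
    s t ≤ s₀ * Real.exp (-(β - umax) * ∫ τ in (0:ℝ)..t, i τ) := by
  set k := β - umax
  set E : ℝ → ℝ := fun τ => s₀ * Real.exp (-k * ∫ σ in (0:ℝ)..τ, i σ)
  have hE : ∀ τ, HasDerivAt E (-k * i τ * E τ) τ := fun τ => by
    simpa [E, mul_comm, mul_left_comm, mul_assoc] using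
      (((hsol.2.1.integral_hasStrictDerivAt 0 τ).hasDerivAt.const_mul (-k)).exp).const_mul s₀
  have hEcont : Continuous E := continuous_iff_continuousAt.2 fun τ => (hE τ).continuousAt
  have hEint : ∀ x y, IntervalIntegrable (fun τ => -k * i τ * E τ) volume x y := fun x y =>
    ((continuous_const.mul hsol.2.1).mul hEcont).intervalIntegrable x y
  have hcomp := nonpos_of_sub_eq_integral (φ := fun τ => s τ - E τ)
    (g := fun τ => -((β - u τ) * s τ * i τ) - -k * i τ * E τ) (hsol.1.sub hEcont).continuousOn
    (by simp [E, hsol.s_zero]) (fun x hx y hy => by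
      rw [sub_sub_sub_comm, intervalIntegral.integral_sub (hsol.intervalIntegrable_s hu x y)
        (hEint x y), intervalIntegral.integral_eq_sub_of_hasDerivAt (fun τ _ => hE τ) (hEint x y),
        sub_eq_integral_of_eq_add_integral (hsol.intervalIntegrable_s hu) hsol.2.2.1
          hx.1 (hx.1.trans hy.1)])
    (fun τ hτ hφτ => by
      have hiτ := hsol.i_pos hu hi₀ τ hτ.1.le
      have hEτ : 0 ≤ E τ := mul_nonneg hs₀ (Real.exp_pos _).le
      have hku : k ≤ β - u τ := by linarith [(hu.2 τ).2]
      nlinarith [mul_nonneg (sub_nonneg.2 hku) (mul_pos (hEτ.trans_lt (sub_pos.1 hφτ)) hiτ).le,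
        mul_nonneg (mul_nonneg (sub_nonneg.2 hβ) hiτ.le) hφτ.le])
    t ⟨ht, le_rfl⟩
  exact sub_nonpos.1 hcomp

lemma sirPotential_le (hu : IsControl umax u) (hsol : SIRSol β γ u s i s₀ i₀) (hγ : 0 ≤ γ)
    (hβ : umax < β) (hs₀ : 0 < s₀) (hi₀ : 0 < i₀) {t : ℝ} (ht : 0 ≤ t) :
    i₀ + sirPotential (γ / (β - umax)) s₀ ≤ i t + sirPotential (γ / (β - umax)) (s t) := by
  set I := ∫ τ in (0:ℝ)..t, i τ
  have hk : 0 < β - umax := sub_pos.2 hβ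
  have hlog : Real.log (s t) ≤ Real.log s₀ - (β - umax) * I := by
    have := Real.log_le_log (hsol.s_pos hu hs₀ t ht) (hsol.s_le_exp hu hβ.le hs₀.le hi₀ ht)
    rwa [Real.log_mul hs₀.ne' (Real.exp_ne_zero _), Real.log_exp, neg_mul, ← sub_eq_add_neg] at this
  have := mul_le_mul_of_nonneg_left hlog (div_nonneg hγ hk.le)
  rw [mul_sub, ← mul_assoc, div_mul_cancel₀ _ hk.ne'] at this
  unfold sirPotential
  linarith [hsol.s_add_i_eq hu ht]

/-- If `s` stayed above `γ / (β - umax)`, then `i ≥ i₀`, and `s + i = s₀ + i₀ - γ ∫ i` would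
become negative. -/
lemma exists_s_le (hu : IsControl umax u) (hsol : SIRSol β γ u s i s₀ i₀) (hγ : 0 < γ)
    (hβ : umax < β) (hi₀ : 0 < i₀) : ∃ t, 0 ≤ t ∧ s t ≤ γ / (β - umax) := by
  by_contra! hs
  have hk : 0 < β - umax := sub_pos.2 hβ
  have hρ : 0 < γ / (β - umax) := div_pos hγ hk
  have hi : ∀ t, 0 ≤ t → i₀ ≤ i t := fun t ht => by
    rw [← sub_nonneg, hsol.2.2.2 t ht, add_sub_cancel_left]
    refine intervalIntegral.integral_nonneg ht fun τ hτ => ?_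
    have hγs : γ ≤ (β - u τ) * s τ :=
      calc γ = (β - umax) * (γ / (β - umax)) := (mul_div_cancel₀ _ hk.ne').symm
        _ ≤ (β - umax) * s τ := mul_le_mul_of_nonneg_left (hs τ hτ.1).le hk.le
        _ ≤ (β - u τ) * s τ := mul_le_mul_of_nonneg_right (by linarith [(hu.2 τ).2])
            (hρ.trans (hs τ hτ.1)).le
    linarith [mul_nonneg (sub_nonneg.2 hγs) (hsol.i_pos hu hi₀ τ hτ.1).le]
  set t := (s₀ + i₀) / (γ * i₀)
  have ht : 0 ≤ t := by
    have hs₀ := hsol.s_zero ▸ hs 0 le_rfl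
    exact div_nonneg (by linarith) (by positivity)
  have hI : i₀ * t ≤ ∫ τ in (0:ℝ)..t, i τ := by
    simpa [mul_comm] using intervalIntegral.integral_mono_on ht
      (intervalIntegrable_const (μ := volume)) (hsol.2.1.intervalIntegrable 0 t)
      fun τ hτ => hi τ hτ.1
  have hγt : γ * (i₀ * t) = s₀ + i₀ := by
    simp only [t]; field_simp
  linarith [hsol.s_add_i_eq hu ht, hs t ht, hi t ht, mul_le_mul_of_nonneg_left hI hγ.le]

lemma exists_eq_min (hu : IsControl umax u) (hsol : SIRSol β γ u s i s₀ i₀) (hγ : 0 < γ)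
    (hβ : umax < β) (hi₀ : 0 < i₀) : ∃ t, 0 ≤ t ∧ s t = min s₀ (γ / (β - umax)) := by
  rcases le_total s₀ (γ / (β - umax)) with h | h
  · exact ⟨0, le_rfl, by rw [min_eq_left h, hsol.s_zero]⟩
  · obtain ⟨t, ht, hst⟩ := hsol.exists_s_le hu hγ hβ hi₀
    obtain ⟨τ, hτ, hsτ⟩ := intermediate_value_Icc' ht hsol.1.continuousOn
      ⟨hst, hsol.s_zero ▸ h⟩
    exact ⟨τ, hτ.1, by rw [hsτ, min_eq_right h]⟩

lemma le_phiMax (hu : IsControl umax u) (hsol : SIRSol β γ u s i s₀ i₀) {iM : ℝ}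
    (hadm : Admissible iM i) (hγ : 0 < γ) (hβ : umax < β) (hs₀ : 0 < s₀) (hi₀ : 0 < i₀) :
    i₀ ≤ PhiMax β γ umax iM s₀ := by
  obtain ⟨t, ht, hst⟩ := hsol.exists_eq_min hu hγ hβ hi₀
  have := hsol.sirPotential_le hu hγ.le hβ hs₀ hi₀ ht
  rw [hst] at this
  rw [phiMax_eq]
  linarith [hadm t ht]

end SIRSol

end ControlledSIR

/-- `s` is the time reversal of the integral curve of `x ↦ k x (V - sirPotential ρ x)` on the
interval around `s₀` where this field is positive; since `sirPotential ρ` is convex, the field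
vanishes at most linearly at the ends of that interval. -/
lemma exists_hasDerivAt_sirPotential {k ρ V s₀ : ℝ} (hk : 0 < k) (hρ : 0 < ρ) (hs₀ : 0 < s₀)
    (hV : sirPotential ρ s₀ < V) : ∃ s : ℝ → ℝ, s 0 = s₀ ∧ (∀ t, 0 < s t) ∧ Antitone s ∧
      ∀ t, HasDerivAt s (-(k * s t * (V - sirPotential ρ (s t)))) t := by
  obtain ⟨a, b, ha, has₀, hs₀b, hVa, hVb, hlt⟩ := exists_Ioo_sirPotential_lt hρ hs₀ hV
  set J : ℝ → ℝ := fun x => V - sirPotential ρ x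
  have hpos : ∀ x ∈ Ioo a b, 0 < k * x * J x := fun x hx =>
    mul_pos (mul_pos hk (ha.trans hx.1)) (sub_pos.2 (hlt x hx))
  have hbound : ∀ x ∈ Ioo a b, k * x * J x ≤ k * b * J x := fun x hx =>
    mul_le_mul_of_nonneg_right (mul_le_mul_of_nonneg_left hx.2.le hk.le) (sub_pos.2 (hlt x hx)).le
  have hkb : 0 ≤ k * b := mul_nonneg hk.le (ha.trans (has₀.trans hs₀b)).le
  set C := k * b * (|ρ / a - 1| + |ρ / b - 1|)
  obtain ⟨z, hz0, hzab, hz⟩ := exists_hasDerivAt_of_pos_of_le_mul (h := fun x => k * x * J x)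
    (C := C) ⟨has₀, hs₀b⟩ (fun x hx => ((continuousAt_const.mul continuousAt_id).mul
      (continuousAt_const.sub (hasDerivAt_sirPotential ρ (ha.trans hx.1)).continuousAt)
      ).continuousWithinAt) hpos
    (fun x hx => by
      have hJ := sub_sirPotential_le_abs_mul hρ.le (ha.trans hx.1) ha hVa
      rw [abs_of_pos (sub_pos.2 hx.1)] at hJ
      calc k * x * J x ≤ k * b * (|ρ / a - 1| * (x - a)) :=
            (hbound x hx).trans (mul_le_mul_of_nonneg_left hJ hkb)
        _ ≤ k * b * (|ρ / a - 1| * (x - a)) + k * b * |ρ / b - 1| * (x - a) :=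
            le_add_of_nonneg_right (by have := sub_pos.2 hx.1; positivity)
        _ = C * (x - a) := by ring)
    (fun x hx => by
      have hJ := sub_sirPotential_le_abs_mul hρ.le (ha.trans hx.1) (ha.trans (hx.1.trans hx.2)) hVb
      rw [abs_of_neg (sub_neg.2 hx.2), neg_sub] at hJ
      calc k * x * J x ≤ k * b * (|ρ / b - 1| * (b - x)) :=
            (hbound x hx).trans (mul_le_mul_of_nonneg_left hJ hkb)
        _ ≤ k * b * |ρ / a - 1| * (b - x) + k * b * (|ρ / b - 1| * (b - x)) :=
            le_add_of_nonneg_left (by have := sub_pos.2 hx.2; positivity)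
        _ = C * (b - x) := by ring)
  have hzmono : Monotone z := (strictMono_of_hasDerivAt_pos hz fun t => hpos _ (hzab t)).monotone
  refine ⟨fun t => z (-t), by simpa using hz0, fun t => ha.trans (hzab (-t)).1,
    fun t₁ t₂ h => hzmono (neg_le_neg h), fun t => ?_⟩
  have := (hz (-t)).comp t (hasDerivAt_neg t)
  rwa [mul_neg_one] at this

theorem exists_sirSol_const {β γ c s₀ i₀ : ℝ} (hγ : 0 < γ) (hc : c < β) (hs₀ : 0 < s₀)
    (hi₀ : 0 < i₀) : ∃ s i : ℝ → ℝ, SIRSol β γ (fun _ => c) s i s₀ i₀ ∧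
      (∀ t, 0 ≤ t → 0 < s t ∧ s t ≤ s₀) ∧
      ∀ t, i t + sirPotential (γ / (β - c)) (s t) = i₀ + sirPotential (γ / (β - c)) s₀ := by
  set k := β - c
  have hk : 0 < k := sub_pos.2 hc
  set ρ := γ / k
  set V := i₀ + sirPotential ρ s₀
  obtain ⟨s, hs0, hspos, hsanti, hs⟩ :=
    exists_hasDerivAt_sirPotential hk (div_pos hγ hk) hs₀ (by linarith : sirPotential ρ s₀ < V)
  set i : ℝ → ℝ := fun t => V - sirPotential ρ (s t)
  have hi : ∀ t, HasDerivAt i (k * s t * i t - γ * i t) t := fun t => by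
    refine (((hasDerivAt_sirPotential ρ (hspos t)).comp t (hs t)).const_sub V).congr_deriv ?_
    rw [show γ = ρ * k from (div_mul_cancel₀ γ hk.ne').symm]
    field_simp [(hspos t).ne']
    ring
  have hscont : Continuous s := continuous_iff_continuousAt.2 fun t => (hs t).continuousAt
  have hicont : Continuous i := continuous_iff_continuousAt.2 fun t => (hi t).continuousAt
  refine ⟨s, i, ⟨hscont, hicont, fun t _ => ?_, fun t _ => ?_⟩,
    fun t ht => ⟨hspos t, hs0 ▸ hsanti ht⟩, fun t => sub_add_cancel _ _⟩
  · show s t = s₀ + ∫ τ in (0:ℝ)..t, -(k * s τ * i τ)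
    rw [intervalIntegral.integral_eq_sub_of_hasDerivAt (fun τ _ => hs τ)
      (((continuous_const.mul hscont).mul hicont).neg.intervalIntegrable _ _), hs0]
    ring
  · show i t = i₀ + ∫ τ in (0:ℝ)..t, (k * s τ * i τ - γ * i τ)
    rw [intervalIntegral.integral_eq_sub_of_hasDerivAt (fun τ _ => hi τ)
      ((((continuous_const.mul hscont).mul hicont).sub
        (continuous_const.mul hicont)).intervalIntegrable _ _)]
    simp [i, hs0, V]

theorem statement7_general (β γ umax iM : ℝ) (hγ : 0 < γ)
    (humax : 0 < umax) (humaxβ : umax < β) :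
    ViableSet β γ umax iM
      = {p : ℝ × ℝ | p ∈ Triangle ∧ 0 < p.2 ∧ p.2 ≤ PhiMax β γ umax iM p.1} := by
  ext ⟨s₀, i₀⟩
  constructor
  · rintro ⟨hT, u, s, i, hu, hsol, hadm⟩
    exact ⟨hT, hT.2.2.1, hsol.le_phiMax hu hadm hγ humaxβ hT.1 hT.2.2.1⟩
  · rintro ⟨hT, hi₀, hle⟩
    obtain ⟨s, i, hsol, hs, hconst⟩ := exists_sirSol_const hγ humaxβ hT.1 hi₀
    refine ⟨hT, fun _ => umax, s, i, ⟨measurable_const, fun _ => ⟨humax.le, le_rfl⟩⟩, hsol,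
      fun t ht => ?_⟩
    rw [phiMax_eq] at hle
    linarith [hconst t, sirPotential_min_le (div_pos hγ (sub_pos.2 humaxβ)) (hs t ht).1 (hs t ht).2]

/-- Characterization of the viable set: `B = {(s,i) ∈ T : 0 < i ≤ Φ_max(s)}`. -/
theorem statement7 (β γ umax iM : ℝ) (hβ : 0 < β) (hγ : 0 < γ)
    (humax : 0 < umax) (humaxβ : umax < β) (hiM : iM ∈ Set.Ioo (0:ℝ) 1) :
    ViableSet β γ umax iM
      = {p : ℝ × ℝ | p ∈ Triangle ∧ 0 < p.2 ∧ p.2 ≤ PhiMax β γ umax iM p.1} :=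
  statement7_general β γ umax iM hγ humax humaxβ
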